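/- Suppose the data (x,u) satisfy the standing data assumptions, that ∫_0^T (x(t); u(t))(x(t); u(t))^T dt is positive definite, and let λ ≥ 1 be such that A·A^T + B·B^T < (λ−1)·I_n (strict Loewner inequality) for every (A,B) ∈ Σ(Q). Let δ > 0 with T/δ a positive integer and L ≥ 0, and assume there exist K ∈ ℝ^{m×n}, a symmetric positive definite P ∈ ℝ^{n×n}, and β > (1/2)δTL such that the sampled-data LMI at stepsize δ holds. If either (i) the stacked signal ξ(t) := (ẋ(t); −x(t); −u(t)) is (L/λ)-square Lipschitz, or (ii) V_0^T(ξ) ≤ (1/2)(L/λ)T, then the data (x,u) are informative for quadratic stabilization: there exist K' ∈ ℝ^{m×n} and a symmetric positive definite P' ∈ ℝ^{n×n} such that (A+BK')P' + P'(A+BK')^T is negative definite for every (A,B) ∈ Σ(Q). -/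

import Mathlib

/-!
For `(A, B) ∈ Σ(Q)` and `y ≠ 0` put `z = (y; Aᵀy; Bᵀy)`. Then `ξ(t)ᵀz = w(t)ᵀy` for the noise `w`
of `(A, B)`, so testing the sampled LMI against `z` bounds `yᵀ((A+BK)P + P(A+BK)ᵀ)y` by the
Riemann sum `δ Σₖ (w(kδ)ᵀy)²` minus `yᵀQy + β|y|²`. The function `g(t) = (ξ(t)ᵀz)²` inherits from
`ξξᵀ` its Lipschitz constant, resp. its total variation, scaled by `|z|² ≤ λ|y|²`, so the Riemann
sum exceeds `∫₀ᵀ (w(t)ᵀy)² dt ≤ yᵀQy` by at most `δTL|y|²/2 < β|y|²`. In the variation case each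
sample `g(kδ)` is compared with a point of the cell `[kδ, (k+1)δ]` where `g` lies below its mean.
-/

open MeasureTheory Matrix

noncomputable def opNorm {ι κ : Type} [Fintype ι] [Fintype κ] [DecidableEq κ]
    (M : Matrix ι κ ℝ) : ℝ :=
  ‖LinearMap.toContinuousLinearMap (Matrix.toEuclideanLin M)‖

noncomputable def euclNorm {ι : Type} [Fintype ι] (v : ι → ℝ) : ℝ :=
  Real.sqrt (∑ i, v i ^ 2)

/-- `v` is `L`-square Lipschitz on `[0,T]`. -/
def SqLipschitz {ι : Type} [Fintype ι] [DecidableEq ι] (T L : ℝ) (v : ℝ → ι → ℝ) : Prop :=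
  ∀ t₁ ∈ Set.Icc (0:ℝ) T, ∀ t₂ ∈ Set.Icc (0:ℝ) T,
    opNorm (Matrix.vecMulVec (v t₁) (v t₁) - Matrix.vecMulVec (v t₂) (v t₂)) ≤ L * |t₁ - t₂|

/-- The set of all partition sums appearing in the definition of total square variation. -/
def partitionSums {ι : Type} [Fintype ι] [DecidableEq ι] (T : ℝ) (v : ℝ → ι → ℝ) : Set ℝ :=
  { s | ∃ (N : ℕ) (t : Fin (N + 1) → ℝ), Monotone t ∧ t 0 = 0 ∧ t (Fin.last N) = T ∧
      s = ∑ i : Fin N, opNorm (Matrix.vecMulVec (v (t i.succ)) (v (t i.succ)) -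
            Matrix.vecMulVec (v (t i.castSucc)) (v (t i.castSucc))) }

/-- Total square variation `V_0^T(v)`. -/
noncomputable def totalSqVar {ι : Type} [Fintype ι] [DecidableEq ι] (T : ℝ) (v : ℝ → ι → ℝ) : ℝ :=
  sSup (partitionSums T v)

/-- `V_0^T(v) ≤ c`, phrased via all partition sums. -/
def TotalSqVarLE {ι : Type} [Fintype ι] [DecidableEq ι] (T : ℝ) (v : ℝ → ι → ℝ) (c : ℝ) : Prop :=
  ∀ s ∈ partitionSums T v, s ≤ c

/-- Loewner order `M ≤ N`. -/
def loewnerLE {ι : Type} [Fintype ι] (M N : Matrix ι ι ℝ) : Prop := (N - M).PosSemidef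

/-- Strict Loewner order `M < N`. -/
def loewnerLT {ι : Type} [Fintype ι] (M N : Matrix ι ι ℝ) : Prop := (N - M).PosDef

/-- `M` is negative definite. -/
def negDefQ {ι : Type} [Fintype ι] (M : Matrix ι ι ℝ) : Prop := (-M).PosDef

/-- Entrywise Lebesgue integral of a matrix-valued function on `[0,T]`. -/
noncomputable def matIntegral {ι κ : Type} (T : ℝ) (f : ℝ → Matrix ι κ ℝ) : Matrix ι κ ℝ :=
  Matrix.of fun i j => ∫ t in Set.Ioc (0:ℝ) T, f t i j

/-- `δ • Σ_{k<N} v(kδ) v(kδ)ᵀ`. -/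
noncomputable def sampledGram {ι : Type} [Fintype ι] (δ : ℝ) (N : ℕ) (v : ℝ → ι → ℝ) :
    Matrix ι ι ℝ :=
  δ • ∑ k ∈ Finset.range N, Matrix.vecMulVec (v (k * δ)) (v (k * δ))

/-- The noise signal `ẋ − Ax − Bu` associated with a candidate system `(A,B)`. -/
def noiseSig {n m : ℕ} (xdot x : ℝ → Fin n → ℝ) (u : ℝ → Fin m → ℝ)
    (A : Matrix (Fin n) (Fin n) ℝ) (B : Matrix (Fin n) (Fin m) ℝ) : ℝ → Fin n → ℝ :=
  fun t => xdot t - A.mulVec (x t) - B.mulVec (u t)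

/-- `Σ(Q')`: systems consistent with the continuous-time data. -/
def SigmaCont {n m : ℕ} (T : ℝ) (xdot x : ℝ → Fin n → ℝ) (u : ℝ → Fin m → ℝ)
    (Q' : Matrix (Fin n) (Fin n) ℝ) :
    Set (Matrix (Fin n) (Fin n) ℝ × Matrix (Fin n) (Fin m) ℝ) :=
  { AB | loewnerLE (matIntegral T fun t =>
      Matrix.vecMulVec (noiseSig xdot x u AB.1 AB.2 t) (noiseSig xdot x u AB.1 AB.2 t)) Q' }

/-- `Σ^δ(Q')`: systems consistent with the data sampled at stepsize `δ` (with `N = T/δ` samples). -/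
def SigmaDisc {n m : ℕ} (δ : ℝ) (N : ℕ) (xdot x : ℝ → Fin n → ℝ) (u : ℝ → Fin m → ℝ)
    (Q' : Matrix (Fin n) (Fin n) ℝ) :
    Set (Matrix (Fin n) (Fin n) ℝ × Matrix (Fin n) (Fin m) ℝ) :=
  { AB | loewnerLE (sampledGram δ N (noiseSig xdot x u AB.1 AB.2)) Q' }

/-- `M^L_{x,u}`: systems whose associated noise is `L`-square Lipschitz. -/
def Mset {n m : ℕ} (T L : ℝ) (xdot x : ℝ → Fin n → ℝ) (u : ℝ → Fin m → ℝ) :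
    Set (Matrix (Fin n) (Fin n) ℝ × Matrix (Fin n) (Fin m) ℝ) :=
  { AB | SqLipschitz T L (noiseSig xdot x u AB.1 AB.2) }

/-- `N^L_{x,u}`: systems whose associated noise has total square variation at most `LT/2`. -/
def Nset {n m : ℕ} (T L : ℝ) (xdot x : ℝ → Fin n → ℝ) (u : ℝ → Fin m → ℝ) :
    Set (Matrix (Fin n) (Fin n) ℝ × Matrix (Fin n) (Fin m) ℝ) :=
  { AB | TotalSqVarLE T (noiseSig xdot x u AB.1 AB.2) (L * T / 2) }

/-- The stacked signal `ξ(t) = (ẋ(t); −x(t); −u(t))`. -/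
def xiSig {n m : ℕ} (xdot x : ℝ → Fin n → ℝ) (u : ℝ → Fin m → ℝ) (t : ℝ) :
    (Fin n ⊕ (Fin n ⊕ Fin m)) → ℝ :=
  Sum.elim (xdot t) (Sum.elim (fun i => -(x t i)) (fun j => -(u t j)))

/-- The block matrix `[[Q + βI, P, PKᵀ], [P, 0, 0], [KP, 0, 0]]`. -/
noncomputable def lmiBlock {n m : ℕ} (Q P : Matrix (Fin n) (Fin n) ℝ)
    (K : Matrix (Fin m) (Fin n) ℝ) (β : ℝ) :
    Matrix (Fin n ⊕ (Fin n ⊕ Fin m)) (Fin n ⊕ (Fin n ⊕ Fin m)) ℝ :=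
  Matrix.fromBlocks (Q + β • (1 : Matrix (Fin n) (Fin n) ℝ))
    (Matrix.of fun i jj => Sum.elim (fun j => P i j) (fun j => (P * K.transpose) i j) jj)
    (Matrix.of fun ii j => Sum.elim (fun i => P i j) (fun k => (K * P) k j) ii)
    0

/-- The continuous-data LMI. -/
def ContLMI {n m : ℕ} (T : ℝ) (xdot x : ℝ → Fin n → ℝ) (u : ℝ → Fin m → ℝ)
    (Q P : Matrix (Fin n) (Fin n) ℝ) (K : Matrix (Fin m) (Fin n) ℝ) (β : ℝ) : Prop :=
  (matIntegral T (fun t => Matrix.vecMulVec (xiSig xdot x u t) (xiSig xdot x u t)) -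
    lmiBlock Q P K β).PosSemidef

/-- The sampled-data LMI at stepsize `δ` (with `N = T/δ` samples). -/
def SampLMI {n m : ℕ} (δ : ℝ) (N : ℕ) (xdot x : ℝ → Fin n → ℝ) (u : ℝ → Fin m → ℝ)
    (Q P : Matrix (Fin n) (Fin n) ℝ) (K : Matrix (Fin m) (Fin n) ℝ) (β : ℝ) : Prop :=
  (sampledGram δ N (xiSig xdot x u) - lmiBlock Q P K β).PosSemidef


section Quadratic

variable {ι : Type} [Fintype ι]

lemma euclNorm_nonneg (v : ι → ℝ) : 0 ≤ euclNorm v :=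
  Real.sqrt_nonneg _

lemma euclNorm_mul_self (v : ι → ℝ) : euclNorm v * euclNorm v = v ⬝ᵥ v := by
  rw [euclNorm, Real.mul_self_sqrt (by positivity)]
  simp only [dotProduct, sq]

lemma euclNorm_eq_norm_toLp (v : ι → ℝ) : euclNorm v = ‖WithLp.toLp 2 v‖ := by
  simp [euclNorm, EuclideanSpace.norm_eq, sq_abs]

lemma abs_dotProduct_mulVec_le [DecidableEq ι] (M : Matrix ι ι ℝ) (a b : ι → ℝ) :
    |a ⬝ᵥ (M *ᵥ b)| ≤ opNorm M * (euclNorm a * euclNorm b) := by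
  have hinner : a ⬝ᵥ (M *ᵥ b) = inner ℝ (WithLp.toLp 2 a)
      (LinearMap.toContinuousLinearMap (Matrix.toEuclideanLin M) (WithLp.toLp 2 b)) := by
    simp [EuclideanSpace.inner_toLp_toLp, dotProduct_comm]
  rw [hinner, euclNorm_eq_norm_toLp, euclNorm_eq_norm_toLp, opNorm]
  calc _ ≤ ‖WithLp.toLp 2 a‖ * ‖LinearMap.toContinuousLinearMap (Matrix.toEuclideanLin M)
          (WithLp.toLp 2 b)‖ := abs_real_inner_le_norm _ _
    _ ≤ ‖WithLp.toLp 2 a‖ * (‖LinearMap.toContinuousLinearMap (Matrix.toEuclideanLin M)‖ *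
          ‖WithLp.toLp 2 b‖) := by gcongr; exact ContinuousLinearMap.le_opNorm _ _
    _ = _ := by ring

lemma dotProduct_vecMulVec_mulVec (v a b : ι → ℝ) :
    a ⬝ᵥ (vecMulVec v v *ᵥ b) = (v ⬝ᵥ a) * (v ⬝ᵥ b) := by
  rw [vecMulVec_mulVec, dotProduct_comm v a]
  simp [dotProduct_smul, mul_comm]

lemma dotProduct_sampledGram_mulVec (δ : ℝ) (N : ℕ) (v : ℝ → ι → ℝ) (z : ι → ℝ) :
    z ⬝ᵥ (sampledGram δ N v *ᵥ z) =
      δ * ∑ k ∈ Finset.range N, (v (k * δ) ⬝ᵥ z) * (v (k * δ) ⬝ᵥ z) := by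
  simp only [sampledGram, smul_mulVec, dotProduct_smul, smul_eq_mul, Matrix.sum_mulVec,
    dotProduct_sum, dotProduct_vecMulVec_mulVec]

end Quadratic

lemma dotProduct_matIntegral_vecMulVec_mulVec {ι : Type} [Fintype ι] {T : ℝ} (w : ℝ → ι → ℝ)
    (hw : ∀ i j, IntegrableOn (fun t => w t i * w t j) (Set.Ioc 0 T)) (a b : ι → ℝ) :
    a ⬝ᵥ (matIntegral T (fun t => vecMulVec (w t) (w t)) *ᵥ b) =
      ∫ t in Set.Ioc 0 T, (w t ⬝ᵥ a) * (w t ⬝ᵥ b) := by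
  have hsum : ∀ t, (w t ⬝ᵥ a) * (w t ⬝ᵥ b) = ∑ i, ∑ j, a i * (w t i * w t j) * b j := by
    intro t
    rw [dotProduct_comm, dotProduct_comm (w t), dotProduct, dotProduct, Finset.sum_mul_sum]
    exact Finset.sum_congr rfl fun i _ => Finset.sum_congr rfl fun j _ => by ring
  simp_rw [hsum]
  rw [integral_finsetSum _ fun i _ => integrable_finsetSum _ fun j _ =>
    ((hw i j).const_mul _).mul_const _]
  simp only [dotProduct, mulVec, matIntegral, of_apply, vecMulVec_apply, Finset.mul_sum]
  refine Finset.sum_congr rfl fun i _ => ?_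
  rw [integral_finsetSum _ fun j _ => ((hw i j).const_mul _).mul_const _]
  refine Finset.sum_congr rfl fun j _ => ?_
  rw [integral_mul_const, integral_const_mul, mul_assoc]

section Plant

variable {n m : ℕ}

def adjointStack (A : Matrix (Fin n) (Fin n) ℝ) (B : Matrix (Fin n) (Fin m) ℝ) (y : Fin n → ℝ) :
    Fin n ⊕ (Fin n ⊕ Fin m) → ℝ :=
  Sum.elim y (Sum.elim (Aᵀ *ᵥ y) (Bᵀ *ᵥ y))

lemma xiSig_dotProduct_adjointStack (xdot x : ℝ → Fin n → ℝ) (u : ℝ → Fin m → ℝ)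
    (A : Matrix (Fin n) (Fin n) ℝ) (B : Matrix (Fin n) (Fin m) ℝ) (y : Fin n → ℝ) (t : ℝ) :
    xiSig xdot x u t ⬝ᵥ adjointStack A B y = noiseSig xdot x u A B t ⬝ᵥ y := by
  have hx : (fun i => -x t i) = -x t := rfl
  have hu : (fun j => -u t j) = -u t := rfl
  simp only [xiSig, adjointStack, noiseSig, sumElim_dotProduct_sumElim, hx, hu,
    dotProduct_transpose_mulVec, sub_dotProduct]
  rw [dotProduct_comm y, dotProduct_comm y, mulVec_neg, mulVec_neg, neg_dotProduct, neg_dotProduct]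
  ring

lemma adjointStack_dotProduct_self (A : Matrix (Fin n) (Fin n) ℝ) (B : Matrix (Fin n) (Fin m) ℝ)
    (y : Fin n → ℝ) :
    adjointStack A B y ⬝ᵥ adjointStack A B y = y ⬝ᵥ ((1 + (A * Aᵀ + B * Bᵀ)) *ᵥ y) := by
  simp only [adjointStack, sumElim_dotProduct_sumElim, add_mulVec, one_mulVec, dotProduct_add,
    ← mulVec_mulVec, dotProduct_transpose_mulVec]

lemma dotProduct_lmiBlock_mulVec (Q P : Matrix (Fin n) (Fin n) ℝ) (K : Matrix (Fin m) (Fin n) ℝ)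
    (β : ℝ) (A : Matrix (Fin n) (Fin n) ℝ) (B : Matrix (Fin n) (Fin m) ℝ) (y : Fin n → ℝ) :
    adjointStack A B y ⬝ᵥ (lmiBlock Q P K β *ᵥ adjointStack A B y) =
      y ⬝ᵥ (Q *ᵥ y) + β * (y ⬝ᵥ y) +
        y ⬝ᵥ (((A + B * K) * P + P * (A + B * K)ᵀ) *ᵥ y) := by
  have hblock : lmiBlock Q P K β = fromBlocks (Q + β • (1 : Matrix (Fin n) (Fin n) ℝ))
      (fromCols P (P * Kᵀ)) (fromRows P (K * P)) 0 := by
    ext (i | i | i) (j | j | j) <;> rfl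
  rw [hblock, adjointStack, fromBlocks_mulVec]
  simp only [Sum.elim_comp_inl, Sum.elim_comp_inr, fromCols_mulVec_sumElim, fromRows_mulVec,
    zero_mulVec, add_zero, sumElim_dotProduct_sumElim, add_mulVec, smul_mulVec, one_mulVec,
    dotProduct_add, dotProduct_smul, smul_eq_mul, transpose_add, transpose_mul, add_mul, mul_add,
    ← mulVec_mulVec]
  rw [dotProduct_comm (Aᵀ *ᵥ y), dotProduct_comm (Bᵀ *ᵥ y), dotProduct_transpose_mulVec,
    dotProduct_transpose_mulVec]
  ring

end Plant

lemma negDefQ_of_dotProduct_mulVec_neg {n : ℕ} {M : Matrix (Fin n) (Fin n) ℝ} (hM : Mᵀ = M)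
    (h : ∀ y ≠ 0, y ⬝ᵥ (M *ᵥ y) < 0) : negDefQ M := by
  refine PosDef.of_dotProduct_mulVec_pos ?_ fun y hy => ?_
  · simp [IsHermitian, conjTranspose_eq_transpose_of_trivial, hM]
  · simpa [neg_mulVec] using h y hy

section Sampling

open Finset

def PartitionVariationLE (T : ℝ) (g : ℝ → ℝ) (C : ℝ) : Prop :=
  ∀ (M : ℕ) (s : ℕ → ℝ), Monotone s → s 0 = 0 → s M = T →
    ∑ i ∈ range M, |g (s (i + 1)) - g (s i)| ≤ C

variable {g : ℝ → ℝ}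

lemma PartitionVariationLE.eVariationOn_le {T C : ℝ} (hg : PartitionVariationLE T g C) :
    eVariationOn g (Set.Icc 0 T) ≤ ENNReal.ofReal C := by
  refine iSup_le fun ⟨n, u, hu, hus⟩ => ?_
  let s : ℕ → ℝ := fun j => if j = 0 then 0 else if j ≤ n + 1 then u (j - 1) else T
  have hs : Monotone s := by
    refine monotone_nat_of_le_succ fun j => ?_
    rcases j with _ | j
    · simpa [s] using (hus 0).1
    · simp only [s, Nat.add_sub_cancel]
      split_ifs <;> first | omega | exact hu (by omega) | exact (hus _).2 | exact le_rfl
  let F : ℕ → ℝ := fun j => |g (s (j + 1)) - g (s j)|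
  simp only [edist_dist, Real.dist_eq]
  rw [← ENNReal.ofReal_sum_of_nonneg fun _ _ => abs_nonneg _]
  refine ENNReal.ofReal_le_ofReal ?_
  calc ∑ i ∈ range n, |g (u (i + 1)) - g (u i)| = ∑ i ∈ range n, F (i + 1) :=
        sum_congr rfl fun i hi => by
          have := mem_range.1 hi
          simp only [F, s, Nat.add_sub_cancel, if_neg (Nat.succ_ne_zero _),
            if_pos (show i + 1 + 1 ≤ n + 1 by omega), if_pos (show i + 1 ≤ n + 1 by omega)]
    _ ≤ ∑ i ∈ range (n + 1), F (i + 1) :=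
        sum_le_sum_of_subset_of_nonneg (range_subset_range.2 n.le_succ) fun _ _ _ => abs_nonneg _
    _ ≤ ∑ i ∈ range (n + 1), F (i + 1) + F 0 := le_add_of_nonneg_right (abs_nonneg _)
    _ = ∑ i ∈ range (n + 2), F i := (sum_range_succ' F (n + 1)).symm
    _ ≤ C := hg _ s hs rfl (by simp [s])

lemma PartitionVariationLE.integrableOn {T C : ℝ} (hg : PartitionVariationLE T g C) :
    IntegrableOn g (Set.Icc 0 T) := by
  have hbv : BoundedVariationOn g (Set.Icc 0 T) :=
    ne_top_of_le_ne_top ENNReal.ofReal_ne_top hg.eVariationOn_le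
  obtain ⟨p, q, hp, hq, rfl⟩ := hbv.locallyBoundedVariationOn.exists_monotoneOn_sub_monotoneOn
  exact (hp.integrableOn_isCompact isCompact_Icc).sub (hq.integrableOn_isCompact isCompact_Icc)

lemma integrableOn_Icc_of_abs_sub_le {a b K : ℝ}
    (hg : ∀ t₁ ∈ Set.Icc a b, ∀ t₂ ∈ Set.Icc a b, |g t₁ - g t₂| ≤ K * |t₁ - t₂|) :
    IntegrableOn g (Set.Icc a b) :=
  (LipschitzOnWith.of_dist_le' (by simpa only [Real.dist_eq] using hg)).continuousOn
    |>.integrableOn_Icc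

lemma riemannSum_le_integral_add {δ : ℝ} {N : ℕ} (hδ : 0 ≤ δ) (e : ℕ → ℝ)
    (hg : IntegrableOn g (Set.Icc 0 (N * δ)))
    (he : ∀ k < N, δ * g (k * δ) - ∫ t in (k * δ)..((k + 1) * δ), g t ≤ e k) :
    δ * ∑ k ∈ range N, g (k * δ) ≤ (∫ t in 0..(N * δ), g t) + ∑ k ∈ range N, e k := by
  have hint : ∀ k < N, IntervalIntegrable g volume ((k : ℝ) * δ) (((k + 1 : ℕ) : ℝ) * δ) := by
    intro k hk
    refine (intervalIntegrable_iff_integrableOn_Icc_of_le (by gcongr; simp)).2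
      (hg.mono_set (Set.Icc_subset_Icc (by positivity) (by gcongr; exact_mod_cast hk)))
  have hsplit := intervalIntegral.sum_integral_adjacent_intervals hint
  push_cast [zero_mul] at hsplit
  rw [← hsplit, mul_sum, ← sub_le_iff_le_add', ← sum_sub_distrib]
  exact sum_le_sum fun k hk => he k (mem_range.1 hk)

lemma mul_sub_integral_le_of_abs_sub_le {a b K : ℝ} (hab : a ≤ b)
    (hg : IntervalIntegrable g volume a b) (hK : ∀ t ∈ Set.Icc a b, |g a - g t| ≤ K * (t - a)) :
    (b - a) * g a - ∫ t in a..b, g t ≤ K * (b - a) ^ 2 / 2 := by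
  have hlin : ∫ t in a..b, K * (t - a) = K * (b - a) ^ 2 / 2 := by
    simp only [intervalIntegral.integral_const_mul, intervalIntegral.integral_sub,
      intervalIntegral.intervalIntegrable_id, intervalIntegrable_const, integral_id,
      intervalIntegral.integral_const, smul_eq_mul]
    ring
  have hmono : ∫ t in a..b, (g a - g t) ≤ ∫ t in a..b, K * (t - a) :=
    intervalIntegral.integral_mono_on hab (intervalIntegrable_const.sub hg)
      (by apply Continuous.intervalIntegrable; fun_prop)
      fun t ht => (le_abs_self _).trans (hK t ht)
  rw [intervalIntegral.integral_sub intervalIntegrable_const hg, intervalIntegral.integral_const,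
    smul_eq_mul, hlin] at hmono
  linarith

lemma exists_mul_sub_integral_le {a b : ℝ} (hab : a < b) (hg : IntegrableOn g (Set.Icc a b)) :
    ∃ τ ∈ Set.Icc a b, (b - a) * g a - ∫ t in a..b, g t ≤ (b - a) * (g a - g τ) := by
  obtain ⟨τ, hτ, hle⟩ := exists_le_setAverage (s := Set.Ioc a b) (by simp [hab]) (by simp)
    (hg.mono_set Set.Ioc_subset_Icc_self)
  refine ⟨τ, Set.Ioc_subset_Icc_self hτ, ?_⟩
  rw [setAverage_eq, Real.volume_real_Ioc_of_le hab.le, smul_eq_mul,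
    ← intervalIntegral.integral_of_le hab.le, inv_mul_eq_div, le_div_iff₀ (sub_pos.2 hab)] at hle
  linarith

lemma riemannSum_le_integral_add_of_abs_sub_le {δ K : ℝ} {N : ℕ} (hδ : 0 ≤ δ)
    (hg : ∀ t₁ ∈ Set.Icc 0 (N * δ), ∀ t₂ ∈ Set.Icc 0 (N * δ), |g t₁ - g t₂| ≤ K * |t₁ - t₂|) :
    δ * ∑ k ∈ range N, g (k * δ) ≤ (∫ t in 0..(N * δ), g t) + K * (N * δ) * δ / 2 := by
  have hint := integrableOn_Icc_of_abs_sub_le hg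
  refine (riemannSum_le_integral_add hδ (fun _ => K * δ ^ 2 / 2) hint fun k hk => ?_).trans_eq
    (by simp only [sum_const, card_range, nsmul_eq_mul]; ring)
  have hkδ : (k : ℝ) * δ ≤ (k + 1) * δ := by gcongr; simp
  have hsub : Set.Icc ((k : ℝ) * δ) ((k + 1) * δ) ⊆ Set.Icc 0 (N * δ) :=
    Set.Icc_subset_Icc (by positivity) (by gcongr; exact_mod_cast hk)
  have h := mul_sub_integral_le_of_abs_sub_le hkδ
    ((intervalIntegrable_iff_integrableOn_Icc_of_le hkδ).2 (hint.mono_set hsub)) fun t ht => by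
      have := hg _ (hsub (Set.left_mem_Icc.2 hkδ)) t (hsub ht)
      rwa [abs_of_nonpos (sub_nonpos.2 ht.1), neg_sub] at this
  convert h using 2 <;> ring

lemma PartitionVariationLE.sum_abs_sub_le {δ C : ℝ} {N : ℕ}
    (hg : PartitionVariationLE (N * δ) g C) (τ : ℕ → ℝ)
    (hτ : ∀ k : ℕ, τ k ∈ Set.Icc ((k : ℝ) * δ) ((k + 1) * δ)) :
    ∑ k ∈ range N, |g (τ k) - g (k * δ)| ≤ C := by
  let s : ℕ → ℝ := fun j => if Even j then ((j / 2 : ℕ) : ℝ) * δ else τ (j / 2)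
  have hs_even : ∀ k, s (2 * k) = k * δ := fun k => by simp [s]
  have hs_odd : ∀ k, s (2 * k + 1) = τ k := fun k => by
    simp [s, show (2 * k + 1) / 2 = k by omega]
  have hs : Monotone s := by
    refine monotone_nat_of_le_succ fun j => ?_
    obtain ⟨k, rfl | rfl⟩ := Nat.even_or_odd' j
    · rw [hs_even, hs_odd]; exact (hτ k).1
    · rw [hs_odd, show 2 * k + 1 + 1 = 2 * (k + 1) by ring, hs_even]; push_cast; exact (hτ k).2
  let F : ℕ → ℝ := fun j => |g (s (j + 1)) - g (s j)|
  have hpair : ∀ M, ∑ k ∈ range M, (F (2 * k) + F (2 * k + 1)) = ∑ j ∈ range (2 * M), F j := by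
    intro M
    induction M with
    | zero => simp
    | succ M ih =>
      rw [sum_range_succ, ih, mul_add, mul_one, sum_range_succ, sum_range_succ, add_assoc]
  calc ∑ k ∈ range N, |g (τ k) - g (k * δ)| ≤ ∑ k ∈ range N, (F (2 * k) + F (2 * k + 1)) :=
        sum_le_sum fun k _ => by
          simp only [F, hs_even, hs_odd]
          exact le_add_of_nonneg_right (abs_nonneg _)
    _ = ∑ j ∈ range (2 * N), F j := hpair N
    _ ≤ C := hg _ s hs (by simpa using hs_even 0) (by simpa using hs_even N)

lemma riemannSum_le_integral_add_of_partitionVariationLE {δ C : ℝ} {N : ℕ} (hδ : 0 < δ)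
    (hg : PartitionVariationLE (N * δ) g C) :
    δ * ∑ k ∈ range N, g (k * δ) ≤ (∫ t in 0..(N * δ), g t) + δ * C := by
  have hint := hg.integrableOn
  have hτ : ∀ k : ℕ, ∃ τ ∈ Set.Icc ((k : ℝ) * δ) ((k + 1) * δ),
      k < N → δ * g (k * δ) - ∫ t in (k * δ)..((k + 1) * δ), g t ≤ δ * (g (k * δ) - g τ) := by
    intro k
    by_cases hk : k < N
    · obtain ⟨τ, hτ, h⟩ := exists_mul_sub_integral_le (g := g) (a := k * δ) (b := (k + 1) * δ)
        (by nlinarith) (hint.mono_set (Set.Icc_subset_Icc (by positivity)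
          (by gcongr; exact_mod_cast hk)))
      exact ⟨τ, hτ, fun _ => by convert h using 2 <;> ring⟩
    · exact ⟨k * δ, Set.left_mem_Icc.2 (by nlinarith), fun h => absurd h hk⟩
  choose τ hτI hτ using hτ
  refine (riemannSum_le_integral_add hδ.le _ hint hτ).trans ?_
  rw [← mul_sum]
  gcongr
  refine (sum_le_sum fun k _ => ?_).trans (hg.sum_abs_sub_le τ hτI)
  rw [abs_sub_comm]
  exact le_abs_self _

end Sampling

section Signal

variable {ι : Type} [Fintype ι] [DecidableEq ι] {T : ℝ} {v : ℝ → ι → ℝ}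

lemma abs_dotProduct_mul_sub_le_opNorm (v : ℝ → ι → ℝ) (a b : ι → ℝ) (t₁ t₂ : ℝ) :
    |(v t₁ ⬝ᵥ a) * (v t₁ ⬝ᵥ b) - (v t₂ ⬝ᵥ a) * (v t₂ ⬝ᵥ b)| ≤
      opNorm (vecMulVec (v t₁) (v t₁) - vecMulVec (v t₂) (v t₂)) * (euclNorm a * euclNorm b) := by
  simpa only [sub_mulVec, dotProduct_sub, dotProduct_vecMulVec_mulVec] using
    abs_dotProduct_mulVec_le (vecMulVec (v t₁) (v t₁) - vecMulVec (v t₂) (v t₂)) a b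

lemma SqLipschitz.abs_dotProduct_mul_sub_le {c : ℝ} (hv : SqLipschitz T c v) (a b : ι → ℝ) :
    ∀ t₁ ∈ Set.Icc 0 T, ∀ t₂ ∈ Set.Icc 0 T,
      |(v t₁ ⬝ᵥ a) * (v t₁ ⬝ᵥ b) - (v t₂ ⬝ᵥ a) * (v t₂ ⬝ᵥ b)| ≤
        c * (euclNorm a * euclNorm b) * |t₁ - t₂| := fun t₁ h₁ t₂ h₂ =>
  calc _ ≤ opNorm (vecMulVec (v t₁) (v t₁) - vecMulVec (v t₂) (v t₂)) *
          (euclNorm a * euclNorm b) := abs_dotProduct_mul_sub_le_opNorm v a b t₁ t₂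
    _ ≤ c * |t₁ - t₂| * (euclNorm a * euclNorm b) :=
        mul_le_mul_of_nonneg_right (hv t₁ h₁ t₂ h₂)
          (mul_nonneg (euclNorm_nonneg a) (euclNorm_nonneg b))
    _ = _ := by ring

lemma TotalSqVarLE.partitionVariationLE {C : ℝ} (hv : TotalSqVarLE T v C) (a b : ι → ℝ) :
    PartitionVariationLE T (fun t => (v t ⬝ᵥ a) * (v t ⬝ᵥ b))
      (C * (euclNorm a * euclNorm b)) := by
  intro M s hs h0 hM
  have hpart := hv _ ⟨M, fun j => s j, fun _ _ hij => hs hij, h0, hM, rfl⟩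
  calc _ = ∑ i : Fin M, |(v (s (i + 1)) ⬝ᵥ a) * (v (s (i + 1)) ⬝ᵥ b) -
          (v (s i) ⬝ᵥ a) * (v (s i) ⬝ᵥ b)| :=
        (Fin.sum_univ_eq_sum_range (fun i => |(v (s (i + 1)) ⬝ᵥ a) * (v (s (i + 1)) ⬝ᵥ b) -
          (v (s i) ⬝ᵥ a) * (v (s i) ⬝ᵥ b)|) M).symm
    _ ≤ _ := Finset.sum_le_sum fun i _ => abs_dotProduct_mul_sub_le_opNorm v a b _ _
    _ = _ := (Finset.sum_mul ..).symm
    _ ≤ _ := mul_le_mul_of_nonneg_right hpart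
          (mul_nonneg (euclNorm_nonneg a) (euclNorm_nonneg b))

variable {c : ℝ}

lemma integrableOn_dotProduct_mul (h : SqLipschitz T c v ∨ TotalSqVarLE T v (c * T / 2))
    (a b : ι → ℝ) : IntegrableOn (fun t => (v t ⬝ᵥ a) * (v t ⬝ᵥ b)) (Set.Ioc 0 T) :=
  (h.elim (fun h => integrableOn_Icc_of_abs_sub_le (h.abs_dotProduct_mul_sub_le a b))
    fun h => (h.partitionVariationLE a b).integrableOn).mono_set Set.Ioc_subset_Icc_self

lemma dotProduct_sampledGram_mulVec_le {δ : ℝ} {N : ℕ} (hδ : 0 < δ)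
    (h : SqLipschitz (N * δ) c v ∨ TotalSqVarLE (N * δ) v (c * (N * δ) / 2)) (z : ι → ℝ) :
    z ⬝ᵥ (sampledGram δ N v *ᵥ z) ≤
      (∫ t in Set.Ioc 0 (N * δ), (v t ⬝ᵥ z) * (v t ⬝ᵥ z)) + δ * (c * (N * δ) / 2) * (z ⬝ᵥ z) := by
  rw [dotProduct_sampledGram_mulVec, ← intervalIntegral.integral_of_le (by positivity),
    ← euclNorm_mul_self]
  rcases h with h | h
  · exact (riemannSum_le_integral_add_of_abs_sub_le hδ.le
      (h.abs_dotProduct_mul_sub_le z z)).trans_eq (by ring)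
  · exact (riemannSum_le_integral_add_of_partitionVariationLE hδ
      (h.partitionVariationLE z z)).trans_eq (by ring)

end Signal

section System

variable {n m : ℕ} {A : Matrix (Fin n) (Fin n) ℝ} {B : Matrix (Fin n) (Fin m) ℝ}

lemma integral_xiSig_dotProduct_adjointStack_le {T : ℝ} {xdot x : ℝ → Fin n → ℝ}
    {u : ℝ → Fin m → ℝ} {Q : Matrix (Fin n) (Fin n) ℝ} (hAB : (A, B) ∈ SigmaCont T xdot x u Q)
    (hint : ∀ a b, IntegrableOn (fun t => (xiSig xdot x u t ⬝ᵥ a) * (xiSig xdot x u t ⬝ᵥ b))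
      (Set.Ioc 0 T)) (y : Fin n → ℝ) :
    ∫ t in Set.Ioc 0 T, (xiSig xdot x u t ⬝ᵥ adjointStack A B y) *
      (xiSig xdot x u t ⬝ᵥ adjointStack A B y) ≤ y ⬝ᵥ (Q *ᵥ y) := by
  have hentries : ∀ i j, IntegrableOn (fun t => noiseSig xdot x u A B t i *
      noiseSig xdot x u A B t j) (Set.Ioc 0 T) := fun i j => by
    simpa only [xiSig_dotProduct_adjointStack, dotProduct_single_one] using
      hint (adjointStack A B (Pi.single i 1)) (adjointStack A B (Pi.single j 1))
  have hQ := hAB.dotProduct_mulVec_nonneg y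
  simp only [star_trivial, sub_mulVec, dotProduct_sub, sub_nonneg,
    dotProduct_matIntegral_vecMulVec_mulVec _ hentries] at hQ
  simpa only [xiSig_dotProduct_adjointStack] using hQ

lemma adjointStack_dotProduct_self_le {lam : ℝ}
    (h : loewnerLT (A * Aᵀ + B * Bᵀ) ((lam - 1) • (1 : Matrix (Fin n) (Fin n) ℝ)))
    (y : Fin n → ℝ) : adjointStack A B y ⬝ᵥ adjointStack A B y ≤ lam * (y ⬝ᵥ y) := by
  have hy := h.posSemidef.dotProduct_mulVec_nonneg y
  simp only [star_trivial, sub_mulVec, smul_mulVec, one_mulVec, dotProduct_sub,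
    dotProduct_smul, smul_eq_mul] at hy
  rw [adjointStack_dotProduct_self, add_mulVec, one_mulVec, dotProduct_add]
  linarith

end System

theorem stmt16_general
    {n m : ℕ} (T : ℝ)
    (x xdot : ℝ → Fin n → ℝ) (u : ℝ → Fin m → ℝ)
    (Q : Matrix (Fin n) (Fin n) ℝ)
    (lam : ℝ) (hlam : 1 ≤ lam)
    (hbd : ∀ AB ∈ SigmaCont T xdot x u Q,
      loewnerLT (AB.1 * AB.1.transpose + AB.2 * AB.2.transpose)
        ((lam - 1) • (1 : Matrix (Fin n) (Fin n) ℝ)))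
    (δ : ℝ) (hδ : 0 < δ) (N : ℕ) (hTN : T = N * δ)
    (L : ℝ) (hL : 0 ≤ L)
    (K : Matrix (Fin m) (Fin n) ℝ) (P : Matrix (Fin n) (Fin n) ℝ) (β : ℝ)
    (hP : P.PosDef) (hβ : δ * T * L / 2 < β)
    (hlmi : SampLMI δ N xdot x u Q P K β)
    (hxi : SqLipschitz T (L / lam) (xiSig xdot x u) ∨
      TotalSqVarLE T (xiSig xdot x u) (L / lam * T / 2)) :
    ∃ (K' : Matrix (Fin m) (Fin n) ℝ) (P' : Matrix (Fin n) (Fin n) ℝ),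
      P'.PosDef ∧ ∀ AB ∈ SigmaCont T xdot x u Q, negDefQ ((AB.1 + AB.2 * K') * P' + P' * (AB.1 + AB.2 * K').transpose) := by
  subst hTN
  refine ⟨K, P, hP, fun ⟨A, B⟩ hAB => negDefQ_of_dotProduct_mulVec_neg ?_ fun y hy => ?_⟩
  · have hPt : Pᵀ = P := by simpa [conjTranspose_eq_transpose_of_trivial] using hP.isHermitian.eq
    simp only [transpose_add, transpose_mul, transpose_transpose, hPt, add_comm]
  set z := adjointStack A B y
  have hlmiz := hlmi.dotProduct_mulVec_nonneg z
  rw [star_trivial, sub_mulVec, dotProduct_sub, sub_nonneg, dotProduct_lmiBlock_mulVec] at hlmiz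
  have hsamp := dotProduct_sampledGram_mulVec_le hδ hxi z
  have hnoise := integral_xiSig_dotProduct_adjointStack_le hAB (integrableOn_dotProduct_mul hxi) y
  have hcoef : δ * (L / lam * (N * δ) / 2) * (z ⬝ᵥ z) ≤ δ * (N * δ) * L / 2 * (y ⬝ᵥ y) :=
    calc _ ≤ δ * (L / lam * (N * δ) / 2) * (lam * (y ⬝ᵥ y)) := by
          gcongr
          exact adjointStack_dotProduct_self_le (hbd _ hAB) y
      _ = _ := by field_simp
  have hyy : 0 < y ⬝ᵥ y := by simpa using dotProduct_self_star_pos_iff.2 hy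
  linarith [mul_lt_mul_of_pos_right hβ hyy]

theorem stmt16
    {n m : ℕ} (T : ℝ) (hT : 0 < T)
    (x xdot : ℝ → Fin n → ℝ) (u : ℝ → Fin m → ℝ)
    (Q : Matrix (Fin n) (Fin n) ℝ) (hQ : Q.PosSemidef)
    (hxdotL2 : MeasureTheory.MemLp xdot 2 (MeasureTheory.volume.restrict (Set.Icc (0:ℝ) T)))
    (huL2 : MeasureTheory.MemLp u 2 (MeasureTheory.volume.restrict (Set.Icc (0:ℝ) T)))
    (hAC : ∀ t ∈ Set.Icc (0:ℝ) T, ∀ i, x t i = x 0 i + ∫ s in (0:ℝ)..t, xdot s i)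
    (As : Matrix (Fin n) (Fin n) ℝ) (Bs : Matrix (Fin n) (Fin m) ℝ)
    (htrue : (As, Bs) ∈ SigmaCont T xdot x u Q)
    (hpe : (matIntegral T (fun t =>
      Matrix.vecMulVec (Sum.elim (x t) (u t)) (Sum.elim (x t) (u t)))).PosDef)
    (lam : ℝ) (hlam : 1 ≤ lam)
    (hbd : ∀ AB ∈ SigmaCont T xdot x u Q,
      loewnerLT (AB.1 * AB.1.transpose + AB.2 * AB.2.transpose)
        ((lam - 1) • (1 : Matrix (Fin n) (Fin n) ℝ)))
    (δ : ℝ) (hδ : 0 < δ) (N : ℕ) (hN : 0 < N) (hTN : T = N * δ)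
    (L : ℝ) (hL : 0 ≤ L)
    (K : Matrix (Fin m) (Fin n) ℝ) (P : Matrix (Fin n) (Fin n) ℝ) (β : ℝ)
    (hP : P.PosDef) (hβ : δ * T * L / 2 < β)
    (hlmi : SampLMI δ N xdot x u Q P K β)
    (hxi : SqLipschitz T (L / lam) (xiSig xdot x u) ∨
      TotalSqVarLE T (xiSig xdot x u) (L / lam * T / 2)) :
    ∃ (K' : Matrix (Fin m) (Fin n) ℝ) (P' : Matrix (Fin n) (Fin n) ℝ),
      P'.PosDef ∧ ∀ AB ∈ SigmaCont T xdot x u Q, negDefQ ((AB.1 + AB.2 * K') * P' + P' * (AB.1 + AB.2 * K').transpose) :=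
  stmt16_general T x xdot u Q lam hlam hbd δ hδ N hTN L hL K P β hP hβ hlmi hxi
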